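/- Let C be a topos equipped with a cartesian double factorization system (E, J, M) generating a Lawvere–Tierney topology k, and let G = (G, ε, δ) be a cartesian comonad on C such that G is (k, k)-continuous, G(M) ⊆ M and G(J) ⊆ J. Then the Lawvere–Tierney topology k_G on the topos of G-coalgebras C_G generated by the left-induced cartesian dfs (E_G, J_G, M_G) (the preimages of E, J, M under the forgetful functor) equals the extension k̃ of k, i.e. k_G = k̃, where k̃ is the unique coalgebra morphism satisfying m_G ∘ k̃ = G(k) ∘ m_G for the equalizer m_G : Ω_G → GΩ of 1_{GΩ} and G(char(G(true)))∘δ_Ω. -/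

import Mathlib

open CategoryTheory CategoryTheory.Limits

universe v u v₂ u₂

namespace DFS

variable {C : Type u} [Category.{v} C]

/-- `f` is (left) orthogonal to `g`: every commutative square from `f` to `g`
admits a unique diagonal filler. -/
def Orth {A B X Y : C} (f : A ⟶ B) (g : X ⟶ Y) : Prop :=
  ∀ (u : A ⟶ X) (v : B ⟶ Y), u ≫ g = f ≫ v → ∃! h : B ⟶ X, f ≫ h = u ∧ h ≫ g = v

/-- Mutual orthogonality of two classes of morphisms. -/
def ClassOrth (L R : MorphismProperty C) : Prop :=
  ∀ ⦃A B X Y : C⦄ (f : A ⟶ B) (g : X ⟶ Y), L f → R g → Orth f g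

/-- The class `R·L` of composites `e ≫ m` with `e ∈ L` and `m ∈ R`. -/
def Comp (R L : MorphismProperty C) : MorphismProperty C :=
  fun X Y f => ∃ (Z : C) (e : X ⟶ Z) (m : Z ⟶ Y), L e ∧ R m ∧ e ≫ m = f

/-- An object `X` is `L`-local if precomposition with every member of `L` is a
bijection of hom-sets into `X`. -/
def IsLocal (L : MorphismProperty C) (X : C) : Prop :=
  ∀ ⦃A B : C⦄ (m : A ⟶ B), L m → Function.Bijective (fun g : B ⟶ X => m ≫ g)

/-- An object `X` is `L`-separating if precomposition with every member of `L` is an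
injection of hom-sets into `X`. -/
def IsSeparating (L : MorphismProperty C) (X : C) : Prop :=
  ∀ ⦃A B : C⦄ (m : A ⟶ B), L m → Function.Injective (fun g : B ⟶ X => m ≫ g)

/-- A double (orthogonal) factorization system. -/
structure IsDFS (E J M : MorphismProperty C) : Prop where
  postcomp_iso_E : ∀ ⦃A B B' : C⦄ (e : A ⟶ B) (i : B ⟶ B'), IsIso i → E e → E (e ≫ i)
  comp_iso_J : ∀ ⦃A' A B B' : C⦄ (i : A' ⟶ A) (j : A ⟶ B) (i' : B ⟶ B'),
      IsIso i → IsIso i' → J j → J (i ≫ j ≫ i')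
  precomp_iso_M : ∀ ⦃A' A B : C⦄ (i : A' ⟶ A) (m : A ⟶ B), IsIso i → M m → M (i ≫ m)
  fac : ∀ ⦃X Y : C⦄ (f : X ⟶ Y), ∃ (A B : C) (e : X ⟶ A) (j : A ⟶ B) (m : B ⟶ Y),
      E e ∧ J j ∧ M m ∧ e ≫ j ≫ m = f
  lift : ∀ ⦃A B B'' D D' F' : C⦄ (e : A ⟶ B) (j : B ⟶ B'') (j' : D ⟶ D') (m : D' ⟶ F')
      (u : A ⟶ D) (v : B'' ⟶ F'), E e → J j → J j' → M m →
      e ≫ j ≫ v = u ≫ j' ≫ m →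
      ∃! st : (B ⟶ D) × (B'' ⟶ D'),
        e ≫ st.1 = u ∧ st.1 ≫ j' = j ≫ st.2 ∧ st.2 ≫ m = v

/-- An (orthogonal) factorization system. -/
structure IsFS (L R : MorphismProperty C) : Prop where
  fac : ∀ ⦃X Y : C⦄ (f : X ⟶ Y), ∃ (Z : C) (e : X ⟶ Z) (m : Z ⟶ Y), L e ∧ R m ∧ e ≫ m = f
  left_iff : ∀ ⦃A B : C⦄ (f : A ⟶ B), L f ↔ ∀ ⦃X Y : C⦄ (g : X ⟶ Y), R g → Orth f g
  right_iff : ∀ ⦃X Y : C⦄ (g : X ⟶ Y), R g ↔ ∀ ⦃A B : C⦄ (f : A ⟶ B), L f → Orth f g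

/-- Stability of a class of morphisms under pullback. -/
def StableUnderPB (P : MorphismProperty C) : Prop :=
  ∀ ⦃A B A' B' : C⦄ (f : A ⟶ B) (g : B' ⟶ B) (f' : A' ⟶ B') (h : A' ⟶ A),
    IsPullback h f' f g → P f → P f'

/-- A left Quillen functor between categories equipped with dfs's: it maps
trivial cofibrations to trivial cofibrations and cofibrations to cofibrations. -/
def LeftQuillen {D : Type u₂} [Category.{v₂} D]
    (EC JC : MorphismProperty C) (ED JD : MorphismProperty D) (F : C ⥤ D) : Prop :=
  (∀ ⦃A B : C⦄ (f : A ⟶ B), EC f → ED (F.map f)) ∧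
  (∀ ⦃A B : C⦄ (f : A ⟶ B), Comp JC EC f → Comp JD ED (F.map f))

end DFS
namespace DFS

variable {C : Type u} [Category.{v} C]

section Topos

variable [HasTerminal C]

/-- `c : B ⟶ Ω` classifies the morphism `m : A ⟶ B` (relative to the truth arrow
`tr : ⊤ ⟶ Ω`) if the evident square is a pullback. -/
def Classifies (Ω : C) (tr : ⊤_ C ⟶ Ω) {A B : C} (m : A ⟶ B) (c : B ⟶ Ω) : Prop :=
  IsPullback (terminal.from A) m tr c

/-- `(Ω, tr)` is a subobject classifier: every monomorphism has a unique
classifying morphism. -/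
def IsClassifier (Ω : C) (tr : ⊤_ C ⟶ Ω) : Prop :=
  ∀ ⦃A B : C⦄ (m : A ⟶ B), Mono m → ∃! c : B ⟶ Ω, Classifies Ω tr m c

/-- `k : Ω ⟶ Ω` is a Lawvere–Tierney topology: `k ∘ true = true`, `k ∘ k = k` and
`k ∘ ∧ = ∧ ∘ (k × k)`, where `∧ = char(true × true)`. -/
def IsLT [HasBinaryProducts C] (Ω : C) (tr : ⊤_ C ⟶ Ω) (k : Ω ⟶ Ω) : Prop :=
  tr ≫ k = tr ∧ k ≫ k = k ∧
    ∀ meet : Ω ⨯ Ω ⟶ Ω, Classifies Ω tr (prod.lift tr tr) meet →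
      meet ≫ k = prod.map k k ≫ meet

/-- `m` is a `k`-dense monomorphism: its characteristic morphism `c` satisfies
`k ∘ c = true ∘ !`. -/
def IsDense (Ω : C) (tr : ⊤_ C ⟶ Ω) (k : Ω ⟶ Ω) {A B : C} (m : A ⟶ B) : Prop :=
  ∃ c : B ⟶ Ω, Classifies Ω tr m c ∧ c ≫ k = terminal.from B ≫ tr

/-- `m` is a `k`-closed monomorphism: its characteristic morphism `c` satisfies
`k ∘ c = c`. -/
def IsClosed (Ω : C) (tr : ⊤_ C ⟶ Ω) (k : Ω ⟶ Ω) {A B : C} (m : A ⟶ B) : Prop :=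
  ∃ c : B ⟶ Ω, Classifies Ω tr m c ∧ c ≫ k = c

/-- The class of `k`-dense monomorphisms. -/
def denseMonos (Ω : C) (tr : ⊤_ C ⟶ Ω) (k : Ω ⟶ Ω) : MorphismProperty C :=
  fun _ _ m => Mono m ∧ IsDense Ω tr k m

/-- The class of `k`-closed monomorphisms. -/
def closedMonos (Ω : C) (tr : ⊤_ C ⟶ Ω) (k : Ω ⟶ Ω) : MorphismProperty C :=
  fun _ _ m => Mono m ∧ IsClosed Ω tr k m

/-- The class of epimorphisms. -/
def epis : MorphismProperty C := fun _ _ f => Epi f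

/-- `X` is a `k`-sheaf: every hom into `X` extends uniquely along `k`-dense
monomorphisms. -/
def IsSheaf (Ω : C) (tr : ⊤_ C ⟶ Ω) (k : Ω ⟶ Ω) (X : C) : Prop :=
  ∀ ⦃A B : C⦄ (m : A ⟶ B), Mono m → IsDense Ω tr k m →
    Function.Bijective (fun g : B ⟶ X => m ≫ g)

/-- `X` is a `k`-separated object: every hom into `X` extends at most in one way along
`k`-dense monomorphisms. -/
def IsSepObj (Ω : C) (tr : ⊤_ C ⟶ Ω) (k : Ω ⟶ Ω) (X : C) : Prop :=
  ∀ ⦃A B : C⦄ (m : A ⟶ B), Mono m → IsDense Ω tr k m →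
    Function.Injective (fun g : B ⟶ X => m ≫ g)

/-- `n` is the `k`-closure of the monomorphism `m`: `n` is classified by
`k ∘ char m`. -/
def IsClosureOf (Ω : C) (tr : ⊤_ C ⟶ Ω) (k : Ω ⟶ Ω) {A A' B : C}
    (m : A ⟶ B) (n : A' ⟶ B) : Prop :=
  ∃ c : B ⟶ Ω, Classifies Ω tr m c ∧ Classifies Ω tr n (c ≫ k)

/-- A dfs `(E, J, M)` is cartesian: `E` and `J·E` are stable under pullback and
every morphism of `M·J` is a monomorphism. -/
def IsCartesian (E J M : MorphismProperty C) : Prop :=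
  StableUnderPB E ∧ StableUnderPB (Comp J E) ∧
    ∀ ⦃A B : C⦄ (f : A ⟶ B), Comp M J f → Mono f

end Topos

end DFS

namespace DFS

/-- The preimage of a class of morphisms under the forgetful functor from
Eilenberg–Moore coalgebras. -/
def coalgPre {C : Type u} [Category.{v} C] (G : Comonad C) (P : MorphismProperty C) :
    MorphismProperty G.Coalgebra :=
  fun _ _ f => P f.f

end DFS

/-!
Write `χ = m_G ≫ τ`; it classifies the underlying map of `true_G`, whose `(E, J, M)`-factorization
has `M`-part `n`, the underlying map of `m_G'`. Two lifting arguments show that `n` is the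
`k`-closure of `true_G` (the pullback of `m` along `χ`): `n ≫ χ` lifts through `m` against
`e' ≫ j'`, and conversely the pullback of `e ≫ j` along a generalized element of the closure is in
`J·E`, so lifts through `n`. Since `m_G ∘ g = G(m_G ∘ g ∘ τ) ∘ a` for every coalgebra map `g`, and
`G` is continuous, `n` is then the pullback of `G m` along `m_G`, hence of `G true` along
`G k ∘ m_G = m_G ∘ k̃`. Reflected to coalgebras, this says that `k̃` classifies `m_G'`.
-/

namespace CategoryTheory.IsPullback

variable {C : Type u} [Category.{v} C]

theorem of_forall_exists_comp_snd_eq {P X Y Z : C} {fst : P ⟶ X} {snd : P ⟶ Y}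
    {f : X ⟶ Z} {g : Y ⟶ Z} [Mono f] [Mono snd] (w : fst ≫ f = snd ≫ g)
    (H : ∀ {W : C} (a : W ⟶ X) (b : W ⟶ Y), a ≫ f = b ≫ g → ∃ c : W ⟶ P, c ≫ snd = b) :
    IsPullback fst snd f g := by
  choose c hc using fun s : PullbackCone f g => H s.fst s.snd s.condition
  refine IsPullback.of_isLimit (PullbackCone.IsLimit.mk w c (fun s => ?_) hc
    (fun s c' _ hc' => (cancel_mono snd).mp (hc'.trans (hc s).symm)))
  rw [← cancel_mono f, Category.assoc, w, ← Category.assoc, hc, s.condition]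

end CategoryTheory.IsPullback

namespace CategoryTheory.Comonad.Coalgebra

variable {C : Type u} [Category.{v} C] {G : Comonad C} {Ω : C} {τ : G.obj Ω ⟶ Ω}
  {ΩG : G.Coalgebra} {mG : ΩG.A ⟶ G.obj Ω}

theorem Hom.f_comp_eq_a_comp_map
    (hw : mG = mG ≫ G.δ.app Ω ≫ G.map τ) (hcoalg : ΩG.a ≫ G.map mG = mG ≫ G.δ.app Ω)
    {X : G.Coalgebra} (g : X ⟶ ΩG) : g.f ≫ mG = X.a ≫ G.map (g.f ≫ mG ≫ τ) := by
  conv_lhs => rw [hw, ← Category.assoc mG, ← hcoalg, ← Category.assoc, ← Category.assoc,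
    ← g.h]
  simp only [Functor.map_comp, Category.assoc]

end CategoryTheory.Comonad.Coalgebra

namespace DFS

variable {C : Type u} [Category.{v} C]

theorem IsDFS.exists_lift {E J M : MorphismProperty C} (h : IsDFS E J M)
    {X W Y Z D D' : C} {e : X ⟶ W} {j : W ⟶ Y} {v : Y ⟶ Z} {u : X ⟶ D} {j' : D ⟶ D'}
    {m : D' ⟶ Z} (he : E e) (hj : J j) (hj' : J j') (hm : M m)
    (w : e ≫ j ≫ v = u ≫ j' ≫ m) : ∃ t : Y ⟶ D', t ≫ m = v := by
  obtain ⟨⟨_, t⟩, ⟨_, _, ht⟩, _⟩ := h.lift e j j' m u v he hj hj' hm w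
  exact ⟨t, ht⟩

section Classifier

variable [HasTerminal C] {Ω : C} {tr : ⊤_ C ⟶ Ω}

theorem Classifies.mono {A B : C} {m : A ⟶ B} {c : B ⟶ Ω} (hc : Classifies Ω tr m c) :
    Mono m :=
  hc.mono_snd_of_mono (terminalIsTerminal.mono_from tr)

theorem Classifies.of_isPullback {A B A' B' : C} {m : A ⟶ B} {c : B ⟶ Ω} {m' : A' ⟶ B'}
    {f : A' ⟶ A} {g : B' ⟶ B} (hpb : IsPullback f m' m g) (hc : Classifies Ω tr m c) :
    Classifies Ω tr m' (g ≫ c) := by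
  simpa [Classifies] using hpb.paste_horiz hc

theorem classifies_self : Classifies Ω tr tr (𝟙 Ω) := by
  simpa [Classifies, terminal.hom_ext (terminal.from (⊤_ C)) (𝟙 _)] using
    IsPullback.of_id_fst (f := tr)

end Classifier

/-- `(k, k)`-continuity `F (c n) ≤ c (F n)`, stated with arbitrary representatives `n₁`, `n₂`
of the two closures. -/
def IsContinuous [HasTerminal C] (Ω : C) (tr : ⊤_ C ⟶ Ω) (k : Ω ⟶ Ω) (F : C ⥤ C) : Prop :=
  ∀ ⦃X Y X' : C⦄ (n : X ⟶ Y) (n₁ : X' ⟶ Y), Mono n → IsClosureOf Ω tr k n n₁ →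
    ∀ ⦃X'' : C⦄ (n₂ : X'' ⟶ F.obj Y), IsClosureOf Ω tr k (F.map n) n₂ →
      ∃ φ : F.obj X' ⟶ X'', φ ≫ n₂ = F.map n₁

theorem IsContinuous.map_comp_char_comp [HasFiniteLimits C] {Ω : C} {tr : ⊤_ C ⟶ Ω}
    {k : Ω ⟶ Ω} {F : C ⥤ C} (hF : IsContinuous Ω tr k F) {B : C} {m : B ⟶ Ω}
    (hk : Classifies Ω tr m k) {τ : F.obj Ω ⟶ Ω} (hτ : Classifies Ω tr (F.map tr) τ) :
    F.map m ≫ τ ≫ k = terminal.from _ ≫ tr := by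
  have hpb := IsPullback.of_hasPullback tr (τ ≫ k)
  have hcl : Classifies Ω tr (pullback.snd tr (τ ≫ k)) (τ ≫ k) := by
    rwa [Classifies, terminal.hom_ext (terminal.from _) (pullback.fst tr (τ ≫ k))]
  obtain ⟨φ, hφ⟩ := hF tr m (terminalIsTerminal.mono_from tr)
    ⟨𝟙 Ω, classifies_self, by rwa [Category.id_comp]⟩ _ ⟨τ, hτ, hcl⟩
  rw [← hφ, Category.assoc, ← hcl.w, ← Category.assoc]
  exact congrArg (· ≫ tr) (terminal.hom_ext _ _)

section Closure

variable [HasFiniteLimits C] {E J M : MorphismProperty C} {Ω : C} {tr : ⊤_ C ⟶ Ω}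
  {A B : C} {e : ⊤_ C ⟶ A} {j : A ⟶ B} {m : B ⟶ Ω}
  {S S₁ S₂ Y : C} {s : S ⟶ Y} {χ : Y ⟶ Ω} {e' : S ⟶ S₁} {j' : S₁ ⟶ S₂} {n : S₂ ⟶ Y}

theorem IsDFS.exists_comp_eq_comp_char (h : IsDFS E J M) (hfac : e ≫ j ≫ m = tr)
    (hj : J j) (hm : M m) (hs : Classifies Ω tr s χ) (he' : E e') (hj' : J j')
    (hs' : e' ≫ j' ≫ n = s) : ∃ t : S₂ ⟶ B, t ≫ m = n ≫ χ :=
  h.exists_lift (u := terminal.from S ≫ e) he' hj' hj hm <| by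
    rw [← Category.assoc, ← Category.assoc, Category.assoc e', hs', hs.w.symm,
      Category.assoc, hfac]

theorem IsDFS.exists_comp_eq_of_comp_char (h : IsDFS E J M) (hJE : StableUnderPB (Comp J E))
    (hfac : e ≫ j ≫ m = tr) (he : E e) (hj : J j) (hs : Classifies Ω tr s χ) (hj' : J j')
    (hn : M n) (hs' : e' ≫ j' ≫ n = s) {W : C} (b : W ⟶ Y) (x : W ⟶ B)
    (hb : b ≫ χ = x ≫ m) : ∃ t : W ⟶ S₂, t ≫ n = b := by
  have hpb := IsPullback.of_hasPullback (e ≫ j) x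
  obtain ⟨_, eh, jh, heh, hjh, hd⟩ :=
    hJE _ _ _ _ hpb ⟨A, e, j, he, hj, rfl⟩
  have hχ : (pullback.snd (e ≫ j) x ≫ b) ≫ χ = terminal.from _ ≫ tr := by
    rw [Category.assoc, hb, ← Category.assoc, ← hpb.w, Category.assoc, Category.assoc, hfac]
    exact congrArg (· ≫ tr) (terminal.hom_ext _ _)
  obtain ⟨p, hp⟩ : ∃ p, p ≫ s = pullback.snd (e ≫ j) x ≫ b := ⟨_, hs.lift_snd _ _ hχ.symm⟩
  refine h.exists_lift (u := p ≫ e') heh hjh hj' hn ?_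
  rw [← Category.assoc, hd, Category.assoc, hs', hp]

end Closure

section CoalgebraClassifier

variable [HasFiniteLimits C] {G : Comonad C} [PreservesFiniteLimits G.toFunctor]
  [HasFiniteLimits G.Coalgebra] {Ω : C} {tr : ⊤_ C ⟶ Ω} {ΩG : G.Coalgebra}
  {mG : ΩG.A ⟶ G.obj Ω} [Mono mG] {trueG : ⊤_ G.Coalgebra ⟶ ΩG}

theorem isPullback_true_f
    (htrueG : trueG.f ≫ mG = (⊤_ G.Coalgebra).a ≫ G.map (terminal.from _) ≫ G.map tr) :
    IsPullback ((⊤_ G.Coalgebra).a ≫ G.map (terminal.from _)) trueG.f (G.map tr) mG := by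
  have : IsIso ((⊤_ G.Coalgebra).a ≫ G.map (terminal.from _)) :=
    isIso_of_isTerminal (terminalIsTerminal.isTerminalObj G.forget _)
      (terminalIsTerminal.isTerminalObj G.toFunctor _) _
  exact IsPullback.of_horiz_isIso_mono ⟨(Category.assoc _ _ _).trans htrueG.symm⟩

theorem classifies_of_isPullback_map {B : C} {m : B ⟶ Ω} {k : Ω ⟶ Ω}
    (hk : Classifies Ω tr m k)
    (htrueG : trueG.f ≫ mG = (⊤_ G.Coalgebra).a ≫ G.map (terminal.from _) ≫ G.map tr)
    {kt : ΩG ⟶ ΩG} (hkt : kt.f ≫ mG = mG ≫ G.map k) {X : G.Coalgebra} (n : X ⟶ ΩG)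
    {y : X.A ⟶ G.obj B} (hn : IsPullback y n.f (G.map m) mG) :
    Classifies ΩG trueG n kt := by
  have htrue := isPullback_true_f htrueG
  have hbig : IsPullback ((terminal.from X).f ≫ (⊤_ G.Coalgebra).a ≫ G.map (terminal.from _))
      n.f (G.map tr) (kt.f ≫ mG) := by
    rw [hkt, (terminalIsTerminal.isTerminalObj G.toFunctor _).hom_ext (_ ≫ _)
      (y ≫ G.map (terminal.from B))]
    exact hn.paste_horiz (hk.map G.toFunctor)
  have hsq := hbig.of_right ((cancel_mono mG).mp (by simpa [← htrue.w] using hbig.w)) htrue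
  exact hsq.of_map_of_faithful G.forget

end CoalgebraClassifier

end DFS

open DFS

theorem statement17_general {C : Type u} [Category.{v} C] [HasFiniteLimits C]
    (Ω : C) (tr : ⊤_ C ⟶ Ω)
    (E J M : MorphismProperty C) (h : DFS.IsDFS E J M) (hc : DFS.IsCartesian E J M)
    -- the LT-topology `k` generated by `(E, J, M)`
    (A B : C) (e : ⊤_ C ⟶ A) (j : A ⟶ B) (m : B ⟶ Ω)
    (he : E e) (hj : J j) (hm : M m) (hfac : e ≫ j ≫ m = tr)
    (k : Ω ⟶ Ω) (hk : DFS.Classifies Ω tr m k)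
    (G : Comonad C) [PreservesFiniteLimits G.toFunctor]
    -- `G` is `(k, k)`-continuous
    (hcont : ∀ ⦃X Y X' : C⦄ (n : X ⟶ Y) (n₁ : X' ⟶ Y), Mono n →
      DFS.IsClosureOf Ω tr k n n₁ →
      ∀ ⦃X'' : C⦄ (n₂ : X'' ⟶ G.toFunctor.obj Y),
        DFS.IsClosureOf Ω tr k (G.toFunctor.map n) n₂ →
        ∃ φ : G.toFunctor.obj X' ⟶ X'', φ ≫ n₂ = G.toFunctor.map n₁)
    -- `τ = char (G true)`
    (τ : G.toFunctor.obj Ω ⟶ Ω) (hτ : DFS.Classifies Ω tr (G.toFunctor.map tr) τ)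
    -- the subobject classifier of the topos of coalgebras
    [HasFiniteLimits G.Coalgebra]
    (ΩG : G.Coalgebra) (mG : ΩG.A ⟶ G.toFunctor.obj Ω)
    (hw : mG ≫ 𝟙 (G.toFunctor.obj Ω) = mG ≫ (G.δ.app Ω ≫ G.toFunctor.map τ))
    (hlim : Nonempty (IsLimit (Fork.ofι mG hw)))
    (hcoalg : ΩG.a ≫ G.toFunctor.map mG = mG ≫ G.δ.app Ω)
    (trueG : ⊤_ (G.Coalgebra) ⟶ ΩG)
    (htrueG : G.forget.map trueG ≫ mG =
      (⊤_ (G.Coalgebra)).a ≫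
        G.toFunctor.map (terminal.from (⊤_ (G.Coalgebra)).A) ≫ G.toFunctor.map tr)
    (hclG : DFS.IsClassifier ΩG trueG)
    -- the LT-topology `k_G` generated by the left-induced dfs `(E_G, J_G, M_G)`
    (AG BG : G.Coalgebra) (eG : ⊤_ (G.Coalgebra) ⟶ AG) (jG : AG ⟶ BG) (mG' : BG ⟶ ΩG)
    (heG : DFS.coalgPre G E eG) (hjG : DFS.coalgPre G J jG)
    (hmG : DFS.coalgPre G M mG') (hfacG : eG ≫ jG ≫ mG' = trueG)
    (kG : ΩG ⟶ ΩG) (hkG : DFS.Classifies ΩG trueG mG' kG)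
    -- the extension `k̃` of `k`
    (kt : ΩG ⟶ ΩG) (hkt : G.forget.map kt ≫ mG = mG ≫ G.toFunctor.map k) :
    kG = kt := by
  obtain ⟨hlim⟩ := hlim
  have : Mono mG := mono_of_isLimit_fork hlim
  have := hkG.mono
  have : Mono mG'.f := G.forget.map_mono mG'
  have := hk.mono
  have : Mono (G.map m) := G.map_mono m
  have hχ : Classifies Ω tr trueG.f (mG ≫ τ) :=
    Classifies.of_isPullback (isPullback_true_f htrueG) hτ
  have hfacGf : eG.f ≫ jG.f ≫ mG'.f = trueG.f := by simpa using congrArg (·.f) hfacG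
  obtain ⟨t, ht⟩ := h.exists_comp_eq_comp_char hfac hj hm hχ heG hjG hfacGf
  have hGm := IsContinuous.map_comp_char_comp hcont hk hτ
  have hkey : IsPullback (BG.a ≫ G.map t) mG'.f (G.map m) mG := by
    refine IsPullback.of_forall_exists_comp_snd_eq ?_ fun a b hab => ?_
    · rw [mG'.f_comp_eq_a_comp_map (by simpa using hw) hcoalg, ← ht, Functor.map_comp,
        Category.assoc]
    · have hb : (b ≫ mG ≫ τ) ≫ k = terminal.from _ ≫ tr := by
        simp only [Category.assoc]
        rw [← reassoc_of% hab, hGm, ← Category.assoc]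
        exact congrArg (· ≫ tr) (terminal.hom_ext _ _)
      obtain ⟨x, -, hx⟩ := hk.exists_lift _ _ hb.symm
      exact h.exists_comp_eq_of_comp_char hc.2.1 hfac he hj hχ hjG hmG hfacGf b x hx.symm
  exact (hclG mG' hkG.mono).unique hkG (classifies_of_isPullback_map hk htrueG hkt mG' hkey)

/-- Let `C` be a topos with a cartesian dfs `(E, J, M)` generating a
Lawvere–Tierney topology `k`, and `G` a cartesian comonad which is `(k,k)`-continuous
and preserves trivial fibrations (`G(M) ⊆ M`) and bifibrant morphisms (`G(J) ⊆ J`).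
Then the LT-topology `k_G` on the topos of `G`-coalgebras generated by the
left-induced cartesian dfs `(E_G, J_G, M_G)` equals the extension `k̃` of `k`, the
unique coalgebra morphism with `m_G ∘ k̃ = G(k) ∘ m_G`. -/
theorem statement17 {C : Type u} [Category.{v} C] [HasFiniteLimits C]
    [CartesianMonoidalCategory C] [MonoidalClosed C]
    (Ω : C) (tr : ⊤_ C ⟶ Ω) (hΩ : DFS.IsClassifier Ω tr)
    (E J M : MorphismProperty C) (h : DFS.IsDFS E J M) (hc : DFS.IsCartesian E J M)
    -- the LT-topology `k` generated by `(E, J, M)`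
    (A B : C) (e : ⊤_ C ⟶ A) (j : A ⟶ B) (m : B ⟶ Ω)
    (he : E e) (hj : J j) (hm : M m) (hfac : e ≫ j ≫ m = tr)
    (k : Ω ⟶ Ω) (hk : DFS.Classifies Ω tr m k)
    (G : Comonad C) [PreservesFiniteLimits G.toFunctor]
    (hM : ∀ ⦃X Y : C⦄ (f : X ⟶ Y), M f → M (G.toFunctor.map f))
    (hJ : ∀ ⦃X Y : C⦄ (f : X ⟶ Y), J f → J (G.toFunctor.map f))
    -- `G` is `(k, k)`-continuous
    (hcont : ∀ ⦃X Y X' : C⦄ (n : X ⟶ Y) (n₁ : X' ⟶ Y), Mono n →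
      DFS.IsClosureOf Ω tr k n n₁ →
      ∀ ⦃X'' : C⦄ (n₂ : X'' ⟶ G.toFunctor.obj Y),
        DFS.IsClosureOf Ω tr k (G.toFunctor.map n) n₂ →
        ∃ φ : G.toFunctor.obj X' ⟶ X'', φ ≫ n₂ = G.toFunctor.map n₁)
    -- `τ = char (G true)`
    (τ : G.toFunctor.obj Ω ⟶ Ω) (hτ : DFS.Classifies Ω tr (G.toFunctor.map tr) τ)
    -- the subobject classifier of the topos of coalgebras
    [HasFiniteLimits G.Coalgebra]
    (ΩG : G.Coalgebra) (mG : ΩG.A ⟶ G.toFunctor.obj Ω)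
    (hw : mG ≫ 𝟙 (G.toFunctor.obj Ω) = mG ≫ (G.δ.app Ω ≫ G.toFunctor.map τ))
    (hlim : Nonempty (IsLimit (Fork.ofι mG hw)))
    (hcoalg : ΩG.a ≫ G.toFunctor.map mG = mG ≫ G.δ.app Ω)
    (trueG : ⊤_ (G.Coalgebra) ⟶ ΩG)
    (htrueG : G.forget.map trueG ≫ mG =
      (⊤_ (G.Coalgebra)).a ≫
        G.toFunctor.map (terminal.from (⊤_ (G.Coalgebra)).A) ≫ G.toFunctor.map tr)
    (hclG : DFS.IsClassifier ΩG trueG)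
    -- the LT-topology `k_G` generated by the left-induced dfs `(E_G, J_G, M_G)`
    (AG BG : G.Coalgebra) (eG : ⊤_ (G.Coalgebra) ⟶ AG) (jG : AG ⟶ BG) (mG' : BG ⟶ ΩG)
    (heG : DFS.coalgPre G E eG) (hjG : DFS.coalgPre G J jG)
    (hmG : DFS.coalgPre G M mG') (hfacG : eG ≫ jG ≫ mG' = trueG)
    (kG : ΩG ⟶ ΩG) (hkG : DFS.Classifies ΩG trueG mG' kG)
    -- the extension `k̃` of `k`
    (kt : ΩG ⟶ ΩG) (hkt : G.forget.map kt ≫ mG = mG ≫ G.toFunctor.map k) :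
    kG = kt :=
  statement17_general Ω tr E J M h hc A B e j m he hj hm hfac k hk G hcont τ hτ ΩG mG hw hlim hcoalg
    trueG htrueG hclG AG BG eG jG mG' heG hjG hmG hfacG kG hkG kt hkt
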